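/- arXiv:2302.12342 — 3 statements merged into one kernel-verified Lean document; each statement's English description precedes it below -/
import Mathlib

section
/- Blichfeldt's theorem in dimension 2: if B ⊆ ℝ² is Lebesgue measurable with Leb(B) > k for a positive integer k, then there exist k+1 points x₀, …, x_k in B such that x_i − x₀ ∈ ℤ² for every i = 1, …, k. -/
/-!
Cut `B` along the lattice `ℤ²` and translate the pieces into the unit cell `[0,1)²`. Their
measures add up to `vol B > k = k · vol [0,1)²`, so integrating over the cell the number of
translates `g + B` (`g ∈ ℤ²`) covering a point shows that some point `y` of the cell lies in at
least `k + 1` of them; the points `y - g` of `B` then differ by lattice vectors.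
-/

open MeasureTheory Set
open scoped ENNReal Pointwise

namespace MeasureTheory

theorem exists_lt_encard_setOf_mem_of_mul_lt_tsum_measure {α ι : Type*} [MeasurableSpace α]
    {μ : Measure α} [Countable ι] {t : ι → Set α} (ht : ∀ i, NullMeasurableSet (t i) μ) {k : ℕ}
    (h : k * μ univ < ∑' i, μ (t i)) : ∃ x, (k : ℕ∞) < {i | x ∈ t i}.encard := by
  contrapose! h
  have hcount (x : α) : ∑' i, (t i).indicator 1 x = ({i | x ∈ t i}.encard : ℝ≥0∞) := by
    rw [← ENNReal.tsum_set_one, tsum_subtype _ fun _ => 1]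
    rfl
  have hmeas (i : ι) : AEMeasurable ((t i).indicator (1 : α → ℝ≥0∞)) μ :=
    aemeasurable_one.indicator₀ (ht i)
  calc ∑' i, μ (t i) = ∫⁻ x, ∑' i, (t i).indicator 1 x ∂μ := by
        rw [lintegral_tsum hmeas]
        simp_rw [lintegral_indicator_one₀ (ht _)]
    _ ≤ ∫⁻ _, (k : ℝ≥0∞) ∂μ := lintegral_mono fun x => by
        simpa [hcount] using ENat.toENNReal_le.mpr (h x)
    _ = k * μ univ := lintegral_const _

namespace IsAddFundamentalDomain

theorem exists_injective_fin_vadd_mem_of_mul_lt_measure {L E : Type*} [AddGroup L]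
    [Countable L] [AddAction L E] [MeasurableSpace E] [MeasurableConstVAdd L E] {μ : Measure E}
    [VAddInvariantMeasure L E μ] {F s : Set E} (fund : IsAddFundamentalDomain L F μ)
    (hs : NullMeasurableSet s μ) {k : ℕ} (h : k * μ F < μ s) :
    ∃ x : E, ∃ g : Fin (k + 1) → L, Function.Injective g ∧ ∀ i, g i +ᵥ x ∈ s := by
  have hsum : μ s = ∑' g : L, μ.restrict F (g +ᵥ s) := by
    simp_rw [fund.measure_eq_tsum s, Measure.restrict_apply₀' fund.nullMeasurableSet]
  obtain ⟨x, hx⟩ := exists_lt_encard_setOf_mem_of_mul_lt_tsum_measure (μ := μ.restrict F)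
    (fun g => (hs.vadd g).mono Measure.restrict_le_self)
    (by rwa [Measure.restrict_apply_univ, ← hsum])
  obtain ⟨g, -⟩ := Fin.Embedding.exists_embedding_disjoint_range_of_add_le_ENat_card
    (s := (∅ : Set {g : L | x ∈ g +ᵥ s})) (n := k + 1)
    (by simpa using Order.add_one_le_of_lt hx)
  exact ⟨x, fun i => -(g i : L), neg_injective.comp (Subtype.val_injective.comp g.injective),
    fun i => mem_vadd_set_iff_neg_vadd_mem.1 (g i).2⟩

theorem exists_injective_fin_sub_mem_of_mul_lt_measure {E : Type*} [AddGroup E]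
    [MeasurableSpace E] [MeasurableAdd E] {μ : Measure E} [μ.IsAddLeftInvariant]
    {L : AddSubgroup E} [Countable L] {F s : Set E} (fund : IsAddFundamentalDomain L F μ)
    (hs : NullMeasurableSet s μ) {k : ℕ} (h : k * μ F < μ s) :
    ∃ x : Fin (k + 1) → E, Function.Injective x ∧ (∀ i, x i ∈ s) ∧ ∀ i, x i - x 0 ∈ L := by
  obtain ⟨y, g, hg, hgs⟩ := fund.exists_injective_fin_vadd_mem_of_mul_lt_measure hs h
  refine ⟨fun i => g i + y, fun i j hij => hg (Subtype.ext (add_right_cancel hij)), hgs,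
    fun i => ?_⟩
  simpa [add_sub_add_right_eq_sub] using sub_mem (g i).2 (g 0).2

end IsAddFundamentalDomain

end MeasureTheory

theorem OrthonormalBasis.volume_fundamentalDomain {ι F : Type*} [Fintype ι]
    [NormedAddCommGroup F] [InnerProductSpace ℝ F] [FiniteDimensional ℝ F] [MeasurableSpace F]
    [BorelSpace F] (b : OrthonormalBasis ι ℝ F) :
    volume (ZSpan.fundamentalDomain b.toBasis) = 1 := by
  rw [measure_congr (ZSpan.fundamentalDomain_ae_parallelepiped b.toBasis volume),
    OrthonormalBasis.coe_toBasis, b.volume_parallelepiped]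

namespace EuclideanSpace

theorem mem_span_int_basisFun_iff {ι : Type*} [Fintype ι] {v : EuclideanSpace ℝ ι} :
    v ∈ Submodule.span ℤ (range (EuclideanSpace.basisFun ι ℝ).toBasis) ↔
      ∃ n : ι → ℤ, ∀ j, v j = n j := by
  rw [Module.Basis.mem_span_iff_repr_mem]
  simp [Classical.skolem, eq_comm]

theorem exists_injective_fin_mem_sub_eq_intCast {ι : Type*} [Fintype ι]
    {B : Set (EuclideanSpace ℝ ι)} (hB : NullMeasurableSet B) {k : ℕ}
    (h : (k : ℝ≥0∞) < volume B) :
    ∃ x : Fin (k + 1) → EuclideanSpace ℝ ι, Function.Injective x ∧ (∀ i, x i ∈ B) ∧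
      ∀ i, ∃ v : ι → ℤ, ∀ j, (x i - x 0) j = v j := by
  let b := EuclideanSpace.basisFun ι ℝ
  have : Countable (Submodule.span ℤ (range b.toBasis)).toAddSubgroup :=
    inferInstanceAs (Countable (Submodule.span ℤ (range b.toBasis)))
  obtain ⟨x, hx, hxB, hL⟩ :=
    (ZSpan.isAddFundamentalDomain' b.toBasis volume).exists_injective_fin_sub_mem_of_mul_lt_measure
      hB (by rwa [b.volume_fundamentalDomain, mul_one])
  exact ⟨x, hx, hxB, fun i => mem_span_int_basisFun_iff.1 (hL i)⟩

end EuclideanSpace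

theorem stmt_1_general (k : ℕ) (B : Set (EuclideanSpace ℝ (Fin 2)))
    (hB : MeasurableSet B) (hvol : (k : ENNReal) < volume B) :
    ∃ x : Fin (k + 1) → EuclideanSpace ℝ (Fin 2),
      Function.Injective x ∧ (∀ i, x i ∈ B) ∧
      ∀ i, ∃ v : Fin 2 → ℤ, ∀ j, (x i - x 0) j = (v j : ℝ) :=
  EuclideanSpace.exists_injective_fin_mem_sub_eq_intCast hB.nullMeasurableSet hvol

/-- Blichfeldt's theorem in dimension 2: a measurable set of Lebesgue measure
greater than `k` contains `k+1` pairwise distinct points lying in a single coset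
of `ℤ²`. -/
theorem stmt_1 (k : ℕ) (hk : 1 ≤ k) (B : Set (EuclideanSpace ℝ (Fin 2)))
    (hB : MeasurableSet B) (hvol : (k : ENNReal) < volume B) :
    ∃ x : Fin (k + 1) → EuclideanSpace ℝ (Fin 2),
      Function.Injective x ∧ (∀ i, x i ∈ B) ∧
      ∀ i, ∃ v : Fin 2 → ℤ, ∀ j, (x i - x 0) j = (v j : ℝ) :=
  stmt_1_general k B hB hvol
end

section
/- Let 0 < ε < 1/6 and define J(x,y) = (5 + cos(2πx)) · (2 − (1+ε) cos²(πx) cos(2πy)). Then J(x,y) > 5 for all (x,y) ∈ ℝ². -/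
/-!
With `c = cos 2πx` and `d = cos 2πy` we have `cos² πx = (1 + c)/2`, so `J` is an affine,
non-increasing function of `d ∈ [-1, 1]` and is smallest on the curve `y = 0` (`d = 1`).
There `2J − 10 = (1 − c)(25 + 7c)/6 + (1/6 − ε)(1 + c)(5 + c)`, which is positive on `[-1, 1]`.
-/

open Real

lemma five_lt_jacobian_at_one {ε c : ℝ} (hε₁ : -1 ≤ ε) (hε₂ : ε < 1 / 6)
    (hc₁ : -1 ≤ c) (hc₂ : c ≤ 1) :
    5 < (5 + c) * (2 - (1 + ε) * ((1 + c) / 2)) := by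
  nlinarith [mul_nonneg (sub_nonneg.2 hc₂) (by linarith : (0 : ℝ) ≤ 25 + 7 * c),
    mul_nonneg (mul_nonneg (sub_nonneg.2 hε₂.le) (by linarith : (0 : ℝ) ≤ 1 + c))
      (by linarith : (0 : ℝ) ≤ 5 + c)]

lemma five_lt_jacobian {ε c d : ℝ} (hε₁ : -1 ≤ ε) (hε₂ : ε < 1 / 6)
    (hc₁ : -1 ≤ c) (hc₂ : c ≤ 1) (hd : d ≤ 1) :
    5 < (5 + c) * (2 - (1 + ε) * ((1 + c) / 2) * d) := by
  have hcoeff : 0 ≤ (1 + ε) * ((1 + c) / 2) := by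
    apply mul_nonneg <;> linarith
  calc 5 < (5 + c) * (2 - (1 + ε) * ((1 + c) / 2)) := five_lt_jacobian_at_one hε₁ hε₂ hc₁ hc₂
    _ ≤ (5 + c) * (2 - (1 + ε) * ((1 + c) / 2) * d) := by
      have h5c : 0 ≤ 5 + c := by linarith
      exact mul_le_mul_of_nonneg_left (sub_le_sub_left (mul_le_of_le_one_right hcoeff hd) _) h5c

/-- For `0 < ε < 1/6`, the Jacobian
`J(x,y) = (5 + cos(2πx))(2 − (1+ε)cos²(πx)cos(2πy))` is everywhere `> 5`. -/
theorem stmt_11 (ε : ℝ) (hε0 : 0 < ε) (hε : ε < 1 / 6) (x y : ℝ) :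
    5 < (5 + Real.cos (2 * π * x)) *
        (2 - (1 + ε) * Real.cos (π * x) ^ 2 * Real.cos (2 * π * y)) := by
  have hcos_sq : Real.cos (π * x) ^ 2 = (1 + Real.cos (2 * π * x)) / 2 := by
    rw [Real.cos_sq, ← mul_assoc]
    ring
  rw [hcos_sq]
  exact five_lt_jacobian (by linarith) hε (neg_one_le_cos _) (cos_le_one _) (cos_le_one _)
end

section
/- With f and ε < 1 as above, the cone S = {(v₁,v₂) ∈ ℝ²∖{0} : |v₁| ≥ |v₂|} satisfies Df_p(S) ⊆ interior(S) ∪ {0} at every point p, and ‖Df_p(v)‖ ≥ 2√2 ‖v‖ for every v ∈ S; hence f is partially hyperbolic. -/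
open Real

/-!
At `p = (x, y)` the differential of `f` is lower triangular, `v ↦ (a v₁, b v₁ + c v₂)`, with
`a = 5 + cos 2πx ≥ 4` and, by Cauchy–Schwarz for the unit vectors `(sin πx, cos πx)` and
`(sin 2πy, cos 2πy)`, `|b| + |c| ≤ 2 + (1 + ε) < 4`. Hence for `|v₂| ≤ |v₁|` we get
`|b v₁ + c v₂| ≤ (|b| + |c|) |v₁| < |a v₁|`, and `‖Df v‖ ≥ 4 |v₁| ≥ 2√2 ‖v‖`.
-/

noncomputable def skewMap (ε : ℝ) (p : ℝ × ℝ) : ℝ × ℝ :=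
  (5 * p.1 + sin (2 * π * p.1) / (2 * π),
   2 * p.2 - (1 + ε) * cos (π * p.1) ^ 2 * sin (2 * π * p.2) / (2 * π))

theorem hasDerivAt_sin_mul_div {k : ℝ} (hk : k ≠ 0) (x : ℝ) :
    HasDerivAt (fun t => sin (k * t) / k) (cos (k * x)) x := by
  simpa [hk] using (((hasDerivAt_id x).const_mul k).sin).div_const k

theorem hasFDerivAt_skewMap (ε : ℝ) (p : ℝ × ℝ) :
    HasFDerivAt (skewMap ε)
      (((5 + cos (2 * π * p.1)) • ContinuousLinearMap.fst ℝ ℝ ℝ).prod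
        (((1 + ε) * (sin (π * p.1) * cos (π * p.1)) * sin (2 * π * p.2)) •
            ContinuousLinearMap.fst ℝ ℝ ℝ +
          (2 - (1 + ε) * cos (π * p.1) ^ 2 * cos (2 * π * p.2)) •
            ContinuousLinearMap.snd ℝ ℝ ℝ)) p := by
  have h2π : 2 * π ≠ 0 := by positivity
  have hfst : HasDerivAt (fun t => 5 * t + sin (2 * π * t) / (2 * π))
      (5 + cos (2 * π * p.1)) p.1 := by
    simpa using ((hasDerivAt_id' p.1).const_mul 5).fun_add (hasDerivAt_sin_mul_div h2π p.1)
  have hcos : HasDerivAt (fun t => (1 + ε) * cos (π * t) ^ 2)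
      ((1 + ε) * (2 * cos (π * p.1) * (-sin (π * p.1) * π))) p.1 := by
    simpa using (((hasDerivAt_id p.1).const_mul π).cos.pow 2).const_mul (1 + ε)
  have hsin : HasFDerivAt (fun q : ℝ × ℝ => sin (2 * π * q.2) / (2 * π))
      (cos (2 * π * p.2) • ContinuousLinearMap.snd ℝ ℝ ℝ) p :=
    (hasDerivAt_sin_mul_div h2π p.2).comp_hasFDerivAt p hasFDerivAt_snd
  have hsnd := ((hasFDerivAt_snd (p := p)).const_mul (2 : ℝ)).fun_sub
    ((hcos.comp_hasFDerivAt p hasFDerivAt_fst).fun_mul hsin)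
  refine (hfst.comp_hasFDerivAt p hasFDerivAt_fst).prodMk ?_
  convert hsnd using 1
  · funext q; simp only [Function.comp]; ring
  · ext <;> simp
    field_simp

theorem fderiv_skewMap_apply (ε : ℝ) (p v : ℝ × ℝ) :
    fderiv ℝ (skewMap ε) p v =
      ((5 + cos (2 * π * p.1)) * v.1,
        (1 + ε) * (sin (π * p.1) * cos (π * p.1)) * sin (2 * π * p.2) * v.1 +
          (2 - (1 + ε) * cos (π * p.1) ^ 2 * cos (2 * π * p.2)) * v.2) := by
  simp [(hasFDerivAt_skewMap ε p).fderiv]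

theorem abs_mul_add_abs_mul_le_one {s₁ c₁ s₂ c₂ : ℝ} (h₁ : s₁ ^ 2 + c₁ ^ 2 = 1)
    (h₂ : s₂ ^ 2 + c₂ ^ 2 = 1) : |s₁| * |s₂| + |c₁| * |c₂| ≤ 1 := by
  nlinarith [sq_nonneg (|s₁| - |s₂|), sq_nonneg (|c₁| - |c₂|), sq_abs s₁, sq_abs c₁,
    sq_abs s₂, sq_abs c₂]

theorem abs_add_abs_le_of_sin_cos (κ x y : ℝ) :
    |κ * (sin x * cos x) * sin y| + |2 - κ * cos x ^ 2 * cos y| ≤ 2 + |κ| := by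
  have hcs := abs_mul_add_abs_mul_le_one (sin_sq_add_cos_sq x) (sin_sq_add_cos_sq y)
  have hb : |κ * (sin x * cos x) * sin y| = |κ| * |cos x| * (|sin x| * |sin y|) := by
    simp only [abs_mul]; ring
  have hc : |2 - κ * cos x ^ 2 * cos y| ≤ 2 + |κ| * |cos x| * (|cos x| * |cos y|) := by
    refine (abs_sub _ _).trans_eq ?_
    simp only [abs_mul, abs_two, sq]; ring
  calc _ ≤ 2 + |κ| * |cos x| * (|sin x| * |sin y| + |cos x| * |cos y|) := by
        linarith
    _ ≤ 2 + |κ| * 1 * 1 := by gcongr; exact abs_cos_le_one x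
    _ = 2 + |κ| := by ring

def horizontalCone : Set (ℝ × ℝ) := {v | v ≠ 0 ∧ |v.2| ≤ |v.1|}

theorem mem_interior_horizontalCone {v : ℝ × ℝ} (hv : |v.2| < |v.1|) :
    v ∈ interior horizontalCone := by
  have hsub : {w : ℝ × ℝ | |w.2| < |w.1|} ⊆ horizontalCone := by
    rintro w hw
    refine ⟨?_, hw.le⟩
    rintro rfl
    simp at hw
  exact interior_maximal hsub (isOpen_lt continuous_snd.abs continuous_fst.abs) hv

theorem fst_ne_zero_of_mem_horizontalCone {v : ℝ × ℝ} (hv : v ∈ horizontalCone) : v.1 ≠ 0 := by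
  intro h
  have h₂ := hv.2
  rw [h, abs_zero] at h₂
  exact hv.1 (Prod.ext h (abs_nonpos_iff.mp h₂))

theorem lowerTriangular_mem_interior_horizontalCone {a b c : ℝ} (hbc : |b| + |c| < a)
    {v : ℝ × ℝ} (hv : v ∈ horizontalCone) :
    (a * v.1, b * v.1 + c * v.2) ∈ interior horizontalCone := by
  have hv₁ : 0 < |v.1| := abs_pos.mpr (fst_ne_zero_of_mem_horizontalCone hv)
  apply mem_interior_horizontalCone
  calc |b * v.1 + c * v.2| ≤ |b| * |v.1| + |c| * |v.1| := by
        grw [abs_add_le, abs_mul, abs_mul, hv.2]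
    _ = (|b| + |c|) * |v.1| := by ring
    _ < |a| * |v.1| := by gcongr; exact hbc.trans_le (le_abs_self a)
    _ = |a * v.1| := (abs_mul a v.1).symm

theorem two_mul_sqrt_two_mul_sqrt_le {a : ℝ} (ha : 4 ≤ a) {v : ℝ × ℝ} (hv : |v.2| ≤ |v.1|)
    (w : ℝ) : 2 * √2 * √(v.1 ^ 2 + v.2 ^ 2) ≤ √((a * v.1) ^ 2 + w ^ 2) := by
  calc 2 * √2 * √(v.1 ^ 2 + v.2 ^ 2) ≤ 2 * √2 * √(2 * v.1 ^ 2) := by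
        gcongr; nlinarith [sq_le_sq.mpr hv]
    _ = 2 * (√2 * √2) * |v.1| := by rw [sqrt_mul zero_le_two, sqrt_sq_eq_abs]; ring
    _ = 4 * |v.1| := by rw [mul_self_sqrt zero_le_two]; ring
    _ ≤ |a * v.1| := by rw [abs_mul, abs_of_nonneg (show 0 ≤ a by linarith)]; gcongr
    _ ≤ √((a * v.1) ^ 2 + w ^ 2) := abs_le_sqrt (le_add_of_nonneg_right (sq_nonneg w))

/-- The cone `S = {v ≠ 0 : |v₁| ≥ |v₂|}` is mapped by `Df_p` into its interior
(plus `0`) and vectors in `S` are expanded (in the Euclidean norm) by a factor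
of at least `2√2`; hence `f` is partially hyperbolic. -/
theorem stmt_13 (ε : ℝ) (hε0 : 0 < ε) (hε1 : ε < 1) :
    let f : ℝ × ℝ → ℝ × ℝ := fun p =>
      (5 * p.1 + Real.sin (2 * π * p.1) / (2 * π),
       2 * p.2 - (1 + ε) * Real.cos (π * p.1) ^ 2 * Real.sin (2 * π * p.2) / (2 * π))
    let S : Set (ℝ × ℝ) := {v | v ≠ 0 ∧ |v.2| ≤ |v.1|}
    ∀ p : ℝ × ℝ, ∀ v ∈ S,
      (fderiv ℝ f p v ∈ interior S ∪ {0}) ∧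
      2 * Real.sqrt 2 * Real.sqrt (v.1 ^ 2 + v.2 ^ 2) ≤
        Real.sqrt ((fderiv ℝ f p v).1 ^ 2 + (fderiv ℝ f p v).2 ^ 2) := by
  intro f S p v hv
  rw [show f = skewMap ε from rfl, fderiv_skewMap_apply]
  have ha : 4 ≤ 5 + cos (2 * π * p.1) := by linarith [neg_one_le_cos (2 * π * p.1)]
  have hbc := abs_add_abs_le_of_sin_cos (1 + ε) (π * p.1) (2 * π * p.2)
  rw [abs_of_pos (show 0 < 1 + ε by linarith)] at hbc
  exact ⟨Or.inl (lowerTriangular_mem_interior_horizontalCone (by linarith) hv),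
    two_mul_sqrt_two_mul_sqrt_le ha hv.2 _⟩
end
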